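/- arXiv:2512.17118 — 2 statements merged into one kernel-verified Lean document; each statement's English description precedes it below -/
import Mathlib

section
/- Let F be a field of characteristic zero containing an element s with s² = −3. Then for every x ∈ F** := F \ {0,1}, one has 2·({x} + {1−x}) = 0 in the pre-Bloch group P(F). -/
/-- The five-term (pentagon) relations inside the free abelian group on
`F** = F \ {0,1}`: for `x ≠ y` in `F**`, the element
`{x} - {y} + {y/x} + {(1-x)/(1-y)} - {y(1-x)/(x(1-y))}`. -/
def fiveTermSet (F : Type*) [Field F] :
    Set (FreeAbelianGroup {z : F // z ≠ 0 ∧ z ≠ 1}) :=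
  { r | ∃ (x y : F) (hx : x ≠ 0 ∧ x ≠ 1) (hy : y ≠ 0 ∧ y ≠ 1) (_ : x ≠ y)
      (h1 : y / x ≠ 0 ∧ y / x ≠ 1)
      (h2 : (1 - x) / (1 - y) ≠ 0 ∧ (1 - x) / (1 - y) ≠ 1)
      (h3 : y * (1 - x) / (x * (1 - y)) ≠ 0 ∧ y * (1 - x) / (x * (1 - y)) ≠ 1),
      r = FreeAbelianGroup.of ⟨x, hx⟩ - FreeAbelianGroup.of ⟨y, hy⟩
          + FreeAbelianGroup.of ⟨y / x, h1⟩
          + FreeAbelianGroup.of ⟨(1 - x) / (1 - y), h2⟩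
          - FreeAbelianGroup.of ⟨y * (1 - x) / (x * (1 - y)), h3⟩ }

/-- The pre-Bloch group (scissors congruence group) `P(F)`: the quotient of the
free abelian group on `F** = F \ {0,1}` by the subgroup generated by the
five-term relations. -/
abbrev PreBloch (F : Type*) [Field F] :=
  FreeAbelianGroup {z : F // z ≠ 0 ∧ z ≠ 1} ⧸ AddSubgroup.closure (fiveTermSet F)

/-- The class `{z} ∈ P(F)` of a generator `z ∈ F**`. -/
def br {F : Type*} [Field F] (z : F) (h0 : z ≠ 0) (h1 : z ≠ 1) : PreBloch F :=
  QuotientAddGroup.mk (FreeAbelianGroup.of ⟨z, h0, h1⟩)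

/-!
Write `σ(a) = {a} + {a⁻¹}` (`PreBloch.invSum`). Adding the five-term relation for `(y, x)`
to the one for `(x, y)` shows that `σ` is multiplicative, while comparing it with the one for
`(1 - x, 1 - y)`, whose last three terms are the same, shows that `{x} + {1 - x}` does not
depend on `x`. A root `ξ = (1 + s) / 2` of `ξ² - ξ + 1` satisfies `1 - ξ = ξ⁻¹`, so this
constant is `σ(ξ)`, and `2 σ(ξ) = σ(ξ²)` vanishes because `ξ²` is a primitive cube root of
unity: `σ(ξ²) + σ(ξ²) = σ(ξ⁴) = σ(ξ⁻²) = σ(ξ²)`.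
-/

namespace PreBloch

variable {F : Type*} [Field F]

open Classical in
/-- The symbol `{z}`, extended to all of `F` by the convention `{0} = {1} = 0`. -/
noncomputable def bracket (z : F) : PreBloch F :=
  if h : z ≠ 0 ∧ z ≠ 1 then br z h.1 h.2 else 0

theorem bracket_eq_br {z : F} (h0 : z ≠ 0) (h1 : z ≠ 1) : bracket z = br z h0 h1 :=
  dif_pos ⟨h0, h1⟩

@[simp]
theorem bracket_one : bracket (1 : F) = 0 :=
  dif_neg fun h => h.2 rfl

theorem bracket_fiveTerm {x y : F} (hx0 : x ≠ 0) (hx1 : x ≠ 1) (hy0 : y ≠ 0) (hy1 : y ≠ 1)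
    (hxy : x ≠ y) :
    bracket x - bracket y + bracket (y / x) + bracket ((1 - x) / (1 - y))
      - bracket (y * (1 - x) / (x * (1 - y))) = 0 := by
  have h1x : 1 - x ≠ 0 := sub_ne_zero.mpr hx1.symm
  have h1y : 1 - y ≠ 0 := sub_ne_zero.mpr hy1.symm
  have ha : y / x ≠ 0 ∧ y / x ≠ 1 :=
    ⟨div_ne_zero hy0 hx0, fun h => hxy ((div_eq_one_iff_eq hx0).mp h).symm⟩
  have hb : (1 - x) / (1 - y) ≠ 0 ∧ (1 - x) / (1 - y) ≠ 1 :=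
    ⟨div_ne_zero h1x h1y, fun h => hxy (sub_right_injective ((div_eq_one_iff_eq h1y).mp h))⟩
  have hc : y * (1 - x) / (x * (1 - y)) ≠ 0 ∧ y * (1 - x) / (x * (1 - y)) ≠ 1 := by
    refine ⟨div_ne_zero (mul_ne_zero hy0 h1x) (mul_ne_zero hx0 h1y), fun h => hxy ?_⟩
    linear_combination -(div_eq_one_iff_eq (mul_ne_zero hx0 h1y)).mp h
  rw [bracket_eq_br hx0 hx1, bracket_eq_br hy0 hy1, bracket_eq_br ha.1 ha.2,
    bracket_eq_br hb.1 hb.2, bracket_eq_br hc.1 hc.2]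
  simp only [br, ← QuotientAddGroup.mk_add, ← QuotientAddGroup.mk_sub]
  exact (QuotientAddGroup.eq_zero_iff _).mpr <| AddSubgroup.subset_closure
    ⟨x, y, ⟨hx0, hx1⟩, ⟨hy0, hy1⟩, hxy, ha, hb, hc, rfl⟩

theorem bracket_add_bracket_one_sub_eq {x y : F} (hx0 : x ≠ 0) (hx1 : x ≠ 1) (hy0 : y ≠ 0)
    (hy1 : y ≠ 1) : bracket x + bracket (1 - x) = bracket y + bracket (1 - y) := by
  rcases eq_or_ne x y with rfl | hxy
  · rfl
  have h1 := bracket_fiveTerm hy0 hy1 hx0 hx1 hxy.symm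
  have h2 := bracket_fiveTerm (sub_ne_zero.mpr hx1.symm) (fun h => hx0 (sub_eq_self.mp h))
    (sub_ne_zero.mpr hy1.symm) (fun h => hy0 (sub_eq_self.mp h))
    (fun h => hxy (sub_right_injective h))
  rw [sub_sub_cancel, sub_sub_cancel, mul_comm (1 - y) x, mul_comm (1 - x) y] at h2
  rw [← sub_eq_zero, ← sub_self (0 : PreBloch F)]
  nth_rw 1 [← h2]
  rw [← h1]
  abel

noncomputable def invSum (a : F) : PreBloch F :=
  bracket a + bracket a⁻¹

theorem invSum_inv (a : F) : invSum a⁻¹ = invSum a := by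
  rw [invSum, invSum, inv_inv, add_comm]

theorem invSum_div_add_invSum_div {x y : F} (hx0 : x ≠ 0) (hx1 : x ≠ 1) (hy0 : y ≠ 0)
    (hy1 : y ≠ 1) (hxy : x ≠ y) :
    invSum (y / x) + invSum ((1 - x) / (1 - y)) = invSum (y * (1 - x) / (x * (1 - y))) := by
  have h1 := bracket_fiveTerm hx0 hx1 hy0 hy1 hxy
  have h2 := bracket_fiveTerm hy0 hy1 hx0 hx1 hxy.symm
  simp only [invSum, inv_div]
  rw [← sub_eq_zero, ← add_zero (0 : PreBloch F)]
  nth_rw 1 [← h1]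
  rw [← h2]
  abel

theorem invSum_mul {a b : F} (ha0 : a ≠ 0) (hb0 : b ≠ 0) (hab : a * b ≠ 1) :
    invSum (a * b) = invSum a + invSum b := by
  rcases eq_or_ne a 1 with rfl | ha1
  · simp [invSum]
  rcases eq_or_ne b 1 with rfl | hb1
  · simp [invSum]
  have hd : a * b - 1 ≠ 0 := sub_ne_zero.mpr hab
  have ha1' : a - 1 ≠ 0 := sub_ne_zero.mpr ha1
  -- chosen so that the pair `(x, a x)` has `y / x = a` and `(1 - x) / (1 - y) = b`
  set x := (b - 1) / (a * b - 1) with hx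
  have hx0 : x ≠ 0 := div_ne_zero (sub_ne_zero.mpr hb1) hd
  have hx1 : x ≠ 1 := fun h => ha1' <| by
    rw [div_eq_one_iff_eq hd] at h
    exact mul_left_cancel₀ hb0 (by linear_combination -h)
  have h1x : 1 - x = b * (a - 1) / (a * b - 1) := by
    rw [hx, eq_div_iff hd, sub_mul, div_mul_cancel₀ _ hd]; ring
  have h1ax : 1 - a * x = (a - 1) / (a * b - 1) := by
    rw [hx, eq_div_iff hd, sub_mul, mul_div_assoc', div_mul_cancel₀ _ hd]; ring
  have eb : (1 - x) / (1 - a * x) = b := by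
    rw [h1x, h1ax, div_div_div_cancel_right₀ hd, mul_div_cancel_right₀ b ha1']
  have hax1 : a * x ≠ 1 := by
    rw [← sub_ne_zero, ← neg_ne_zero, neg_sub, h1ax]; exact div_ne_zero ha1' hd
  have key := invSum_div_add_invSum_div hx0 hx1 (mul_ne_zero ha0 hx0) hax1
    (fun h => ha1 (mul_right_cancel₀ hx0 (by rw [one_mul]; exact h.symm)))
  rw [mul_div_cancel_right₀ a hx0, eb, mul_right_comm, mul_comm x,
    mul_div_mul_right _ _ hx0, mul_div_assoc, eb] at key
  exact key.symm

theorem invSum_eq_zero_of_pow_three_eq_one {ζ : F} (hζ : ζ ^ 3 = 1) (hζ1 : ζ ≠ 1) :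
    invSum ζ = 0 := by
  have hζ0 : ζ ≠ 0 := by rintro rfl; simp at hζ
  have hsq : ζ * ζ = ζ⁻¹ := eq_inv_of_mul_eq_one_left (by linear_combination hζ)
  have hsq1 : ζ * ζ ≠ 1 := by
    rw [hsq]; exact fun h => hζ1 (inv_eq_one.mp h)
  have h := invSum_mul hζ0 hζ0 hsq1
  rw [hsq, invSum_inv] at h
  simpa using h

theorem two_smul_bracket_add_bracket_one_sub_eq_zero {ξ : F} (hξ : ξ ^ 2 - ξ + 1 = 0)
    (h3 : (3 : F) ≠ 0) {x : F} (hx0 : x ≠ 0) (hx1 : x ≠ 1) :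
    2 • (bracket x + bracket (1 - x)) = 0 := by
  have hξ0 : ξ ≠ 0 := by rintro rfl; norm_num at hξ
  have hξ1 : ξ ≠ 1 := by rintro rfl; norm_num at hξ
  have hsq1 : ξ * ξ ≠ 1 := fun h => h3 (by linear_combination -(ξ + 1) * h + (ξ + 2) * hξ)
  have hcube : (ξ * ξ) ^ 3 = 1 := by linear_combination (ξ ^ 4 + ξ ^ 3 - ξ - 1) * hξ
  have h1ξ : 1 - ξ = ξ⁻¹ := eq_inv_of_mul_eq_one_left (by linear_combination -hξ)
  rw [bracket_add_bracket_one_sub_eq hx0 hx1 hξ0 hξ1, h1ξ, ← invSum, two_smul,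
    ← invSum_mul hξ0 hξ0 hsq1]
  exact invSum_eq_zero_of_pow_three_eq_one hcube hsq1

end PreBloch

/-- Over a field of characteristic zero containing a square root `s` of `-3`,
`2({x} + {1-x}) = 0` in the pre-Bloch group `P(F)` for every
`x ∈ F** = F \ {0,1}`. -/
theorem two_cF_eq_zero (F : Type*) [Field F] [CharZero F]
    (s : F) (hs : s ^ 2 = -3) (x : F) (hx0 : x ≠ 0) (hx1 : x ≠ 1) :
    2 • (br x hx0 hx1
        + br (1 - x) (sub_ne_zero.mpr (Ne.symm hx1)) (fun h => hx0 (sub_eq_self.mp h))) = 0 := by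
  have hξ : ((1 + s) / 2) ^ 2 - (1 + s) / 2 + 1 = 0 := by
    field_simp; linear_combination hs
  rw [← PreBloch.bracket_eq_br, ← PreBloch.bracket_eq_br]
  exact PreBloch.two_smul_bracket_add_bracket_one_sub_eq_zero hξ three_ne_zero hx0 hx1
end

section
/- Let F be a field of characteristic zero containing elements i and s with i² = −1 and s² = −3. Then for every x ∈ F** := F \ {0,1}, one has {x} + {1−x} = 0 in the pre-Bloch group P(F) (i.e., the element c_F vanishes). -/
/-!
For `x, y ∈ F**` the five-term relations at `(x, y)` and at `(1 - y, 1 - x)` share their last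
three terms, so their difference shows that `c(x) = {x} + {1 - x}` does not depend on `x`.
It therefore suffices to find one `z` with `c(z) = 0`. Take `z` a primitive sixth root of unity,
so that `z (1 - z) = 1`, and `u` a square root of `z`: the relations at `(u, u⁻¹)` and `(u⁻¹, u)`
add up to `{z} + {1 - z}`. With `i² = -1` and `s² = -3` one can take `z = (1 + s) / 2` and
`u = i (1 - s) / 2`.
-/

namespace PreBloch

variable {F : Type*} [Field F]

open Classical in
/-- `{z}` for `z ∈ F**`, extended by the junk value `0` at `z = 0` and `z = 1`. -/
noncomputable def symbol (z : F) : PreBloch F :=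
  if h : z ≠ 0 ∧ z ≠ 1 then br z h.1 h.2 else 0

theorem symbol_eq_br {z : F} (h0 : z ≠ 0) (h1 : z ≠ 1) : symbol z = br z h0 h1 :=
  dif_pos ⟨h0, h1⟩

theorem symbol_five_term {x y : F} (hx0 : x ≠ 0) (hx1 : x ≠ 1) (hy0 : y ≠ 0) (hy1 : y ≠ 1)
    (hxy : x ≠ y) :
    symbol x - symbol y + symbol (y / x) + symbol ((1 - x) / (1 - y))
      - symbol (y * (1 - x) / (x * (1 - y))) = 0 := by
  have h1x : 1 - x ≠ 0 := sub_ne_zero.mpr (Ne.symm hx1)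
  have h1y : 1 - y ≠ 0 := sub_ne_zero.mpr (Ne.symm hy1)
  have ha0 : y / x ≠ 0 := div_ne_zero hy0 hx0
  have ha1 : y / x ≠ 1 := fun h => hxy ((div_eq_one_iff_eq hx0).mp h).symm
  have hb0 : (1 - x) / (1 - y) ≠ 0 := div_ne_zero h1x h1y
  have hb1 : (1 - x) / (1 - y) ≠ 1 := fun h =>
    hxy (by linear_combination -(div_eq_one_iff_eq h1y).mp h)
  have hc0 : y * (1 - x) / (x * (1 - y)) ≠ 0 :=
    div_ne_zero (mul_ne_zero hy0 h1x) (mul_ne_zero hx0 h1y)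
  have hc1 : y * (1 - x) / (x * (1 - y)) ≠ 1 := fun h =>
    hxy (by linear_combination -(div_eq_one_iff_eq (mul_ne_zero hx0 h1y)).mp h)
  rw [symbol_eq_br hx0 hx1, symbol_eq_br hy0 hy1, symbol_eq_br ha0 ha1, symbol_eq_br hb0 hb1,
    symbol_eq_br hc0 hc1]
  exact (QuotientAddGroup.eq_zero_iff _).mpr <| AddSubgroup.subset_closure
    ⟨x, y, ⟨hx0, hx1⟩, ⟨hy0, hy1⟩, hxy, ⟨ha0, ha1⟩, ⟨hb0, hb1⟩, ⟨hc0, hc1⟩, rfl⟩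

theorem symbol_add_symbol_one_sub_eq {x y : F} (hx0 : x ≠ 0) (hx1 : x ≠ 1) (hy0 : y ≠ 0)
    (hy1 : y ≠ 1) : symbol x + symbol (1 - x) = symbol y + symbol (1 - y) := by
  rcases eq_or_ne x y with rfl | hxy
  · rfl
  have h1x0 : 1 - x ≠ 0 := sub_ne_zero.mpr (Ne.symm hx1)
  have h1x1 : 1 - x ≠ 1 := fun h => hx0 (by linear_combination -h)
  have h1y0 : 1 - y ≠ 0 := sub_ne_zero.mpr (Ne.symm hy1)
  have h1y1 : 1 - y ≠ 1 := fun h => hy0 (by linear_combination -h)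
  have hxy' : 1 - y ≠ 1 - x := fun h => hxy (by linear_combination h)
  have rel := symbol_five_term hx0 hx1 hy0 hy1 hxy
  have rel' := symbol_five_term h1y0 h1y1 h1x0 h1x1 hxy'
  rw [sub_sub_cancel, sub_sub_cancel,
    show (1 - x) * y / ((1 - y) * x) = y * (1 - x) / (x * (1 - y)) by ring] at rel'
  linear_combination (norm := abel) rel - rel'

theorem symbol_add_symbol_one_sub_eq_zero {z u : F} (hz : z * (1 - z) = 1) (hu : u ^ 2 = z) :
    symbol z + symbol (1 - z) = 0 := by
  subst hu
  have hu0 : u ≠ 0 := by rintro rfl; simp at hz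
  have hu1 : u ≠ 1 := by rintro rfl; simp at hz
  have h1u : 1 - u ≠ 0 := sub_ne_zero.mpr (Ne.symm hu1)
  have hu1' : u - 1 ≠ 0 := sub_ne_zero.mpr hu1
  have hu_inv : u ≠ u⁻¹ := fun h => by
    have hu2 : u ^ 2 = 1 := by rw [sq]; nth_rw 2 [h]; exact mul_inv_cancel₀ hu0
    simp [hu2] at hz
  have hu_inv1 : u⁻¹ ≠ 1 := fun h => hu1 (inv_eq_one.mp h)
  have rel := symbol_five_term hu0 hu1 (inv_ne_zero hu0) hu_inv1 hu_inv
  have rel' := symbol_five_term (inv_ne_zero hu0) hu_inv1 hu0 hu1 hu_inv.symm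
  rw [show u⁻¹ / u = 1 - u ^ 2 by field_simp; linear_combination -hz,
    show (1 - u) / (1 - u⁻¹) = -u by field_simp; ring,
    show u⁻¹ * (1 - u) / (u * (1 - u⁻¹)) = -u⁻¹ by field_simp; ring] at rel
  rw [show u / u⁻¹ = u ^ 2 by field_simp,
    show (1 - u⁻¹) / (1 - u) = -u⁻¹ by field_simp; ring,
    show u * (1 - u⁻¹) / (u⁻¹ * (1 - u)) = -u by field_simp; ring] at rel'
  linear_combination (norm := abel) rel + rel'

end PreBloch

open PreBloch

/-- Over a field of characteristic zero containing square roots of `-1` and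
`-3`, the element `c_F = {x} + {1-x}` vanishes in the pre-Bloch group `P(F)`
for every `x ∈ F** = F \ {0,1}`. -/
theorem cF_eq_zero (F : Type*) [Field F] [CharZero F]
    (i s : F) (hi : i ^ 2 = -1) (hs : s ^ 2 = -3) (x : F) (hx0 : x ≠ 0) (hx1 : x ≠ 1) :
    br x hx0 hx1
      + br (1 - x) (sub_ne_zero.mpr (Ne.symm hx1)) (fun h => hx0 (sub_eq_self.mp h)) = 0 := by
  set z : F := (1 + s) / 2
  have hz : z * (1 - z) = 1 := by linear_combination (-1 / 4 : F) * hs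
  have hu : (i * (1 - s) / 2) ^ 2 = z := by
    linear_combination ((1 - s) ^ 2 / 4) * hi - (1 / 4 : F) * hs
  have hz0 : z ≠ 0 := left_ne_zero_of_mul_eq_one hz
  have hz1 : z ≠ 1 := fun h => by simp [h] at hz
  rw [← symbol_eq_br, ← symbol_eq_br, symbol_add_symbol_one_sub_eq hx0 hx1 hz0 hz1]
  exact symbol_add_symbol_one_sub_eq_zero hz hu
end
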